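/- Let B = k[X₁, X₂], a ∈ k, t ≥ 2, s ≥ t+1, and Q = X₂² − a·X₁·X₂. Then X₁^{s+1} ∉ (Q, X₁^t·X₂), and the Hilbert function of B/(Q, X₁^t X₂, X₁^{s+1}) equals 1 in degree 0; 2 in degrees 1 through t (with value 2 in each of degrees 2, …, t and value 2 in degree 1); 1 in degrees t+1 through s; and 0 in degrees ≥ s+1. -/

import Mathlib

open MvPolynomial

/-- The Hilbert function of `k[X₁,X₂]/K` in degree `n`:
`dim_k S_n − dim_k K_n`. -/
noncomputable def hilbFn (k : Type*) [Field k] (K : Ideal (MvPolynomial (Fin 2) k)) (n : ℕ) : ℕ :=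
  Module.finrank k (homogeneousSubmodule (Fin 2) k n) -
    Module.finrank k
      (Submodule.restrictScalars k K ⊓ homogeneousSubmodule (Fin 2) k n : Submodule k _)

/-!
Write `X₁, X₂` for `X 0, X 1`. Modulo `Q = X₂² − aX₁X₂` every monomial `X₁^i X₂^(j+1)` reduces
to `a^j X₁^(i+j) X₂`; then `X₁^t X₂` kills the `X₁^i X₂` with `i ≥ t` and, as `s ≥ t`, `X₁^(s+1)`
kills the `X₁^i` with `i > s` and nothing else. Sending each monomial to its reduction is a
`k`-linear map whose kernel is exactly `(Q, X₁^t X₂, X₁^(s+1))`, so by rank–nullity the Hilbert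
function in degree `n` counts the surviving normal monomials: `X₁^n` for `n ≤ s` and `X₁^(n-1) X₂`
for `1 ≤ n ≤ t`. The specialisation `X₂ ↦ 0` kills `Q` and `X₁^t X₂` but not `X₁^(s+1)`.
-/

section
variable {σ R : Type*}

theorem monomial_eq_smul_monomial_one [CommSemiring R] (d : σ →₀ ℕ) (c : R) :
    monomial d c = c • monomial d (1 : R) := by
  rw [smul_monomial, smul_eq_mul, mul_one]

theorem restrictScalars_span_le_ker [CommSemiring R] {M : Type*} [AddCommMonoid M] [Module R M]
    (φ : MvPolynomial σ R →ₗ[R] M) {S : Set (MvPolynomial σ R)}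
    (h : ∀ g ∈ S, ∀ d, φ (monomial d 1 * g) = 0) :
    (Ideal.span S).restrictScalars R ≤ LinearMap.ker φ := by
  intro f hf
  suffices ∀ p, φ (p * f) = 0 by simpa using this 1
  induction hf using Submodule.span_induction with
  | mem g hg =>
    intro p
    induction p using MvPolynomial.induction_on' with
    | monomial d c =>
      rw [monomial_eq_smul_monomial_one, smul_mul_assoc, map_smul, h g hg, smul_zero]
    | add p q hp hq => rw [add_mul, map_add, hp, hq, add_zero]
  | zero => simp
  | add x y _ _ hx hy => intro p; rw [mul_add, map_add, hx, hy, add_zero]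
  | smul r x _ hx => intro p; rw [smul_eq_mul, ← mul_assoc]; exact hx _

theorem restrictScalars_eq_ker_of_sub_mem [CommRing R]
    (φ : MvPolynomial σ R →ₗ[R] MvPolynomial σ R) {I : Ideal (MvPolynomial σ R)}
    (hker : I.restrictScalars R ≤ LinearMap.ker φ)
    (hsub : ∀ d, monomial d 1 - φ (monomial d 1) ∈ I) :
    I.restrictScalars R = LinearMap.ker φ := by
  have sub_mem : ∀ f, f - φ f ∈ I := by
    intro f
    induction f using MvPolynomial.induction_on' with
    | monomial d c =>
      rw [monomial_eq_smul_monomial_one, map_smul, ← smul_sub, smul_eq_C_mul]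
      exact I.mul_mem_left _ (hsub d)
    | add p q hp hq => simpa only [map_add, add_sub_add_comm] using I.add_mem hp hq
  refine le_antisymm hker fun f hf => ?_
  simpa [LinearMap.mem_ker.mp hf] using sub_mem f

end

section
variable {k V : Type*} [Field k] [AddCommGroup V] [Module k V]

instance {σ : Type*} [Finite σ] (n : ℕ) : FiniteDimensional k (homogeneousSubmodule σ k n) :=
  Module.Finite.iff_fg.mpr (homogeneousSubmodule_fg _ _ n)

theorem hilbFn_eq_finrank_map {I : Ideal (MvPolynomial (Fin 2) k)}
    (φ : MvPolynomial (Fin 2) k →ₗ[k] V) (hφ : I.restrictScalars k = LinearMap.ker φ) (n : ℕ) :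
    hilbFn k I n = Module.finrank k ((homogeneousSubmodule (Fin 2) k n).map φ) := by
  rw [hilbFn]
  set S := homogeneousSubmodule (Fin 2) k n
  have hker : Module.finrank k (LinearMap.ker (φ.domRestrict S)) =
      Module.finrank k (I.restrictScalars k ⊓ S : Submodule k _) := by
    rw [LinearMap.ker_domRestrict, hφ, inf_comm, ← Submodule.map_comap_subtype]
    exact (Submodule.equivMapOfInjective _ S.injective_subtype _).finrank_eq
  have := (φ.domRestrict S).finrank_range_add_finrank_ker
  rw [LinearMap.range_domRestrict, hker] at this
  omega

theorem finrank_span_monomial_pair {σ : Type*} {d d' : σ →₀ ℕ} (h : d ≠ d') :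
    Module.finrank k (Submodule.span k {monomial d (1 : k), monomial d' 1}) = 2 := by
  have hli := (basisMonomials σ k).linearIndependent.comp ![d, d'] fun i j => by
    fin_cases i <;> fin_cases j <;> simp [h, h.symm]
  rw [← Fintype.card_fin 2, ← finrank_span_eq_card hli, Set.range_comp,
    Matrix.range_cons_cons_empty, Set.image_pair, coe_basisMonomials]

theorem monomial_one_eq_X_pow_mul_X_pow (d : Fin 2 →₀ ℕ) :
    monomial d (1 : k) = X 0 ^ d 0 * X 1 ^ d 1 := by
  rw [monomial_eq, C_1, one_mul, Finsupp.prod_fintype _ _ (by simp), Fin.prod_univ_two]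

theorem X_pow_mul_X_pow_eq_monomial (i j : ℕ) :
    (X 0 ^ i * X 1 ^ j : MvPolynomial (Fin 2) k) =
      monomial (Finsupp.single 0 i + Finsupp.single 1 j) 1 := by
  rw [X_pow_eq_monomial, X_pow_eq_monomial, monomial_mul, one_mul]

theorem homogeneousSubmodule_fin_two_eq_span (n : ℕ) :
    homogeneousSubmodule (Fin 2) k n =
      Submodule.span k ((fun x : ℕ × ℕ => X 0 ^ x.1 * X 1 ^ x.2) '' {x | x.1 + x.2 = n}) := by
  rw [homogeneousSubmodule_eq_finsupp_supported, AddMonoidAlgebra.supported_eq_span_single]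
  congr 1
  ext p
  simp only [Set.mem_image, Set.mem_ofPred_eq, Prod.exists, single_eq_monomial]
  constructor
  · rintro ⟨d, hd, rfl⟩
    refine ⟨d 0, d 1, ?_, (monomial_one_eq_X_pow_mul_X_pow d).symm⟩
    rw [← hd, Finsupp.degree_eq_sum, Fin.sum_univ_two]
  · rintro ⟨i, j, hij, rfl⟩
    refine ⟨_, ?_, (X_pow_mul_X_pow_eq_monomial i j).symm⟩
    simp [Finsupp.degree_eq_sum, Fin.sum_univ_two, hij]

end

section
variable {k : Type*} [Field k] (a : k) (t s : ℕ)

noncomputable def truncatedIdeal : Ideal (MvPolynomial (Fin 2) k) :=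
  Ideal.span {X 1 ^ 2 - C a * X 0 * X 1, X 0 ^ t * X 1, X 0 ^ (s + 1)}

noncomputable def normalFormMonomial : ℕ → ℕ → MvPolynomial (Fin 2) k
  | i, 0 => if i ≤ s then X 0 ^ i else 0
  | i, j + 1 => if i + j + 1 ≤ t then C a ^ j * X 0 ^ (i + j) * X 1 else 0

noncomputable def normalForm : MvPolynomial (Fin 2) k →ₗ[k] MvPolynomial (Fin 2) k :=
  (basisMonomials (Fin 2) k).constr k fun d => normalFormMonomial a t s (d 0) (d 1)

theorem normalForm_monomial_one (d : Fin 2 →₀ ℕ) :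
    normalForm a t s (monomial d 1) = normalFormMonomial a t s (d 0) (d 1) := by
  have := (basisMonomials (Fin 2) k).constr_basis k
    (fun d => normalFormMonomial a t s (d 0) (d 1)) d
  rwa [coe_basisMonomials] at this

theorem normalForm_X_pow_mul_X_pow (i j : ℕ) :
    normalForm a t s (X 0 ^ i * X 1 ^ j) = normalFormMonomial a t s i j := by
  rw [X_pow_mul_X_pow_eq_monomial, normalForm_monomial_one]
  simp

theorem normalForm_mul_quadric (i j : ℕ) :
    normalForm a t s (X 0 ^ i * X 1 ^ j * (X 1 ^ 2 - C a * X 0 * X 1)) = 0 := by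
  have h : (X 0 ^ i * X 1 ^ j * (X 1 ^ 2 - C a * X 0 * X 1) : MvPolynomial (Fin 2) k) =
      X 0 ^ i * X 1 ^ (j + 2) - a • (X 0 ^ (i + 1) * X 1 ^ (j + 1)) := by
    rw [smul_eq_C_mul]; ring
  rw [h, map_sub, map_smul, normalForm_X_pow_mul_X_pow, normalForm_X_pow_mul_X_pow,
    normalFormMonomial, normalFormMonomial, sub_eq_zero]
  split_ifs <;> first | omega | exact (smul_zero a).symm | (rw [smul_eq_C_mul]; ring)

theorem normalForm_mul_X_pow_mul_X (i j : ℕ) :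
    normalForm a t s (X 0 ^ i * X 1 ^ j * (X 0 ^ t * X 1)) = 0 := by
  rw [show (X 0 ^ i * X 1 ^ j * (X 0 ^ t * X 1) : MvPolynomial (Fin 2) k) =
      X 0 ^ (i + t) * X 1 ^ (j + 1) by ring, normalForm_X_pow_mul_X_pow, normalFormMonomial,
    if_neg (by omega)]

theorem normalForm_mul_X_pow (hts : t ≤ s) (i j : ℕ) :
    normalForm a t s (X 0 ^ i * X 1 ^ j * X 0 ^ (s + 1)) = 0 := by
  rw [show (X 0 ^ i * X 1 ^ j * X 0 ^ (s + 1) : MvPolynomial (Fin 2) k) =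
      X 0 ^ (i + s + 1) * X 1 ^ j by ring, normalForm_X_pow_mul_X_pow]
  cases j <;> rw [normalFormMonomial, if_neg (by omega)]

theorem restrictScalars_truncatedIdeal_le_ker (hts : t ≤ s) :
    (truncatedIdeal a t s).restrictScalars k ≤ LinearMap.ker (normalForm a t s) := by
  refine restrictScalars_span_le_ker _ fun g hg d => ?_
  rw [monomial_one_eq_X_pow_mul_X_pow]
  rcases hg with rfl | rfl | rfl
  exacts [normalForm_mul_quadric .., normalForm_mul_X_pow_mul_X ..,
    normalForm_mul_X_pow _ _ _ hts ..]

theorem quadric_dvd_X_pow_mul_X_pow_sub (i j : ℕ) :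
    (X 1 ^ 2 - C a * X 0 * X 1 : MvPolynomial (Fin 2) k) ∣
      X 0 ^ i * X 1 ^ (j + 1) - C a ^ j * X 0 ^ (i + j) * X 1 := by
  induction j with
  | zero => simp
  | succ j ih =>
    obtain ⟨c, hc⟩ := ih
    exact ⟨X 1 * c + C a ^ j * X 0 ^ (i + j), by linear_combination X 1 * hc⟩

theorem X_pow_mul_X_pow_sub_normalFormMonomial_mem (i j : ℕ) :
    X 0 ^ i * X 1 ^ j - normalFormMonomial a t s i j ∈ truncatedIdeal a t s := by
  have quadric_mem : X 1 ^ 2 - C a * X 0 * X 1 ∈ truncatedIdeal a t s :=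
    Ideal.subset_span (by simp)
  have X_pow_mul_X_mem : X 0 ^ t * X 1 ∈ truncatedIdeal a t s := Ideal.subset_span (by simp)
  have X_pow_mem : X 0 ^ (s + 1) ∈ truncatedIdeal a t s := Ideal.subset_span (by simp)
  cases j with
  | zero =>
    rw [normalFormMonomial]
    split_ifs with h
    · simp
    · obtain ⟨m, rfl⟩ : ∃ m, i = s + 1 + m := ⟨i - (s + 1), by omega⟩
      exact Ideal.mem_of_dvd _ ⟨X 0 ^ m, by ring⟩ X_pow_mem
  | succ j =>
    have hQ := (truncatedIdeal a t s).mem_of_dvd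
      (quadric_dvd_X_pow_mul_X_pow_sub a i j) quadric_mem
    rw [normalFormMonomial]
    split_ifs with h
    · exact hQ
    · rw [sub_zero, ← sub_add_cancel (X 0 ^ i * X 1 ^ (j + 1)) (C a ^ j * X 0 ^ (i + j) * X 1)]
      obtain ⟨m, hm⟩ : ∃ m, i + j = t + m := ⟨i + j - t, by omega⟩
      refine add_mem hQ (Ideal.mem_of_dvd _ ⟨C a ^ j * X 0 ^ m, ?_⟩ X_pow_mul_X_mem)
      rw [hm]; ring

theorem restrictScalars_truncatedIdeal_eq_ker (hts : t ≤ s) :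
    (truncatedIdeal a t s).restrictScalars k = LinearMap.ker (normalForm a t s) :=
  restrictScalars_eq_ker_of_sub_mem _ (restrictScalars_truncatedIdeal_le_ker a t s hts) fun d => by
    rw [normalForm_monomial_one, monomial_one_eq_X_pow_mul_X_pow]
    exact X_pow_mul_X_pow_sub_normalFormMonomial_mem a t s _ _

theorem hilbFn_truncatedIdeal (hts : t ≤ s) (n : ℕ) :
    hilbFn k (truncatedIdeal a t s) n = Module.finrank k (Submodule.span k
      ((fun x : ℕ × ℕ => normalFormMonomial a t s x.1 x.2) '' {x | x.1 + x.2 = n})) := by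
  rw [hilbFn_eq_finrank_map _ (restrictScalars_truncatedIdeal_eq_ker a t s hts),
    homogeneousSubmodule_fin_two_eq_span, Submodule.map_span, Set.image_image,
    Set.image_congr fun x _ => normalForm_X_pow_mul_X_pow a t s x.1 x.2]

theorem hilbFn_truncatedIdeal_zero (hts : t ≤ s) : hilbFn k (truncatedIdeal a t s) 0 = 1 := by
  have hdeg : {x : ℕ × ℕ | x.1 + x.2 = 0} = {(0, 0)} := by
    ext ⟨i, j⟩; simp
  rw [hilbFn_truncatedIdeal a t s hts, hdeg, Set.image_singleton, normalFormMonomial,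
    if_pos (Nat.zero_le s), pow_zero]
  exact finrank_span_singleton one_ne_zero

theorem hilbFn_truncatedIdeal_of_le {n : ℕ} (hts : t ≤ s) (hn : n + 1 ≤ t) :
    hilbFn k (truncatedIdeal a t s) (n + 1) = 2 := by
  have hspan : Submodule.span k ((fun x : ℕ × ℕ => normalFormMonomial a t s x.1 x.2) ''
      {x | x.1 + x.2 = n + 1}) = Submodule.span k {X 0 ^ (n + 1), X 0 ^ n * X 1} := by
    apply le_antisymm <;> rw [Submodule.span_le]
    · rintro _ ⟨⟨i, _ | j⟩, hij, rfl⟩ <;> simp only [Set.mem_ofPred_eq] at hij ⊢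
      · rw [normalFormMonomial, if_pos (by omega), show i = n + 1 by omega]
        exact Submodule.subset_span (Set.mem_insert _ _)
      · rw [normalFormMonomial, if_pos (by omega), show i + j = n by omega, mul_assoc, ← C_pow,
          ← smul_eq_C_mul]
        exact Submodule.smul_mem _ _ (Submodule.subset_span (Set.mem_insert_of_mem _ rfl))
    · rintro _ (rfl | rfl)
      · exact Submodule.subset_span ⟨(n + 1, 0), by simp, by simp [normalFormMonomial]; omega⟩
      · exact Submodule.subset_span ⟨(n, 1), by simp, by simp [normalFormMonomial]; omega⟩
  rw [hilbFn_truncatedIdeal a t s hts, hspan, ← pow_one (X (1 : Fin 2)),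
    X_pow_mul_X_pow_eq_monomial, X_pow_eq_monomial, finrank_span_monomial_pair]
  simp [Finsupp.ext_iff]

theorem hilbFn_truncatedIdeal_of_lt_of_le {n : ℕ} (htn : t < n) (hns : n ≤ s) :
    hilbFn k (truncatedIdeal a t s) n = 1 := by
  have hspan : Submodule.span k ((fun x : ℕ × ℕ => normalFormMonomial a t s x.1 x.2) ''
      {x | x.1 + x.2 = n}) = Submodule.span k {X 0 ^ n} := by
    apply le_antisymm <;> rw [Submodule.span_le]
    · rintro _ ⟨⟨i, _ | j⟩, hij, rfl⟩ <;> simp only [Set.mem_ofPred_eq] at hij ⊢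
      · rw [normalFormMonomial, if_pos (by omega), show i = n by omega]
        exact Submodule.subset_span rfl
      · rw [normalFormMonomial, if_neg (by omega)]
        exact zero_mem _
    · rintro _ rfl
      exact Submodule.subset_span ⟨(n, 0), by simp, by simp [normalFormMonomial]; omega⟩
  rw [hilbFn_truncatedIdeal a t s (by omega), hspan]
  exact finrank_span_singleton (pow_ne_zero _ (X_ne_zero 0))

theorem hilbFn_truncatedIdeal_of_lt {n : ℕ} (hts : t ≤ s) (hsn : s < n) :
    hilbFn k (truncatedIdeal a t s) n = 0 := by
  have hspan : Submodule.span k ((fun x : ℕ × ℕ => normalFormMonomial a t s x.1 x.2) ''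
      {x | x.1 + x.2 = n}) = ⊥ := by
    rw [Submodule.span_eq_bot]
    rintro _ ⟨⟨i, _ | j⟩, hij, rfl⟩ <;> simp only [Set.mem_ofPred_eq] at hij ⊢ <;>
      rw [normalFormMonomial, if_neg (by omega)]
  rw [hilbFn_truncatedIdeal a t s hts, hspan, finrank_bot]

theorem X_zero_pow_notMem_span (m : ℕ) :
    X 0 ^ m ∉ Ideal.span ({X 1 ^ 2 - C a * X 0 * X 1, X 0 ^ t * X 1} :
      Set (MvPolynomial (Fin 2) k)) := by
  let ψ : MvPolynomial (Fin 2) k →ₐ[k] Polynomial k := aeval ![Polynomial.X, 0]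
  intro hmem
  have hle : Ideal.span ({X 1 ^ 2 - C a * X 0 * X 1, X 0 ^ t * X 1} :
      Set (MvPolynomial (Fin 2) k)) ≤ RingHom.ker ψ := by
    rw [Ideal.span_le]
    simp [Set.insert_subset_iff, ψ]
  simpa [ψ] using hle hmem

end

theorem hilbert_function_truncated_general
    (k : Type*) [Field k] (a : k) (t s : ℕ) (hs : t + 1 ≤ s)
    (Q : MvPolynomial (Fin 2) k) (hQ : Q = X 1 ^ 2 - C a * X 0 * X 1) :
    (X 0 ^ (s + 1) ∉ Ideal.span ({Q, X 0 ^ t * X 1} : Set (MvPolynomial (Fin 2) k))) ∧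
      (hilbFn k (Ideal.span {Q, X 0 ^ t * X 1, X 0 ^ (s + 1)}) 0 = 1 ∧
        (∀ j, 1 ≤ j → j ≤ t →
          hilbFn k (Ideal.span {Q, X 0 ^ t * X 1, X 0 ^ (s + 1)}) j = 2) ∧
        (∀ j, t + 1 ≤ j → j ≤ s →
          hilbFn k (Ideal.span {Q, X 0 ^ t * X 1, X 0 ^ (s + 1)}) j = 1) ∧
        (∀ j, s + 1 ≤ j →
          hilbFn k (Ideal.span {Q, X 0 ^ t * X 1, X 0 ^ (s + 1)}) j = 0)) := by
  subst hQ
  refine ⟨X_zero_pow_notMem_span a t (s + 1), hilbFn_truncatedIdeal_zero a t s (by omega),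
    fun j hj hjt => ?_, fun j htj hjs => hilbFn_truncatedIdeal_of_lt_of_le a t s htj hjs,
    fun j hsj => hilbFn_truncatedIdeal_of_lt a t s (by omega) hsj⟩
  obtain ⟨n, rfl⟩ := Nat.exists_eq_add_of_le' hj
  exact hilbFn_truncatedIdeal_of_le a t s (by omega) hjt

/-- For `B = k[X₁,X₂]`, `a ∈ k`, `t ≥ 2`, `s ≥ t+1` and
`Q = X₂² − aX₁X₂`, one has `X₁^{s+1} ∉ (Q, X₁^t X₂)` and the Hilbert function of
`B/(Q, X₁^t X₂, X₁^{s+1})` is `1` in degree `0`, `2` in degrees `1,…,t`,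
`1` in degrees `t+1,…,s` and `0` in degrees `≥ s+1`. -/
theorem hilbert_function_truncated
    (k : Type*) [Field k] (a : k) (t s : ℕ) (ht : 2 ≤ t) (hs : t + 1 ≤ s)
    (Q : MvPolynomial (Fin 2) k) (hQ : Q = X 1 ^ 2 - C a * X 0 * X 1) :
    (X 0 ^ (s + 1) ∉ Ideal.span ({Q, X 0 ^ t * X 1} : Set (MvPolynomial (Fin 2) k))) ∧
      (hilbFn k (Ideal.span {Q, X 0 ^ t * X 1, X 0 ^ (s + 1)}) 0 = 1 ∧
        (∀ j, 1 ≤ j → j ≤ t →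
          hilbFn k (Ideal.span {Q, X 0 ^ t * X 1, X 0 ^ (s + 1)}) j = 2) ∧
        (∀ j, t + 1 ≤ j → j ≤ s →
          hilbFn k (Ideal.span {Q, X 0 ^ t * X 1, X 0 ^ (s + 1)}) j = 1) ∧
        (∀ j, s + 1 ≤ j →
          hilbFn k (Ideal.span {Q, X 0 ^ t * X 1, X 0 ^ (s + 1)}) j = 0)) :=
  hilbert_function_truncated_general k a t s hs Q hQ
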